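/- In the setting below, let t < s in [0,T] and let x, x' ∈ ℝ^{nd} with d(x,x') ≤ 1, and let θ_{t,·}(x) and θ_{t,·}(x') be any flows started from x and x' at time t. Then there exists a constant C ≥ 1, depending only on n, d, α, β, the matrix A and the Hölder constant K of F (and not on t, s, x, x'), such that d(θ_{t,s}(x), θ_{t,s}(x')) ≤ C [ d(x,x') + (s−t)^{1/α} ]. -/

import Mathlib

/-!
Write `u_i(v) = |(θ_v - θ'_v)_i|` (blocks indexed from `0`) and, for `ε > 0`,
`φ(v) = d(x,x') + ε + (v - t)^{1/α}`. A continuity argument shows `u_i ≤ (M φ)^{1+αi}` on `[t,s]`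
for a constant `M` depending only on the data. Indeed, if this holds up to time `σ`, integrate the
equation of the difference of the flows between `t` and `σ`: the sub-diagonal structure of `A`
bounds `(A (θ - θ'))_i` by `u_{i-1}`, the Hölder bounds bound `F_i(θ) - F_i(θ')`, and since
`σ - t ≤ φ^α` every term of the increment is at most a constant times `M^{1+αi-γ} φ^{1+αi}`,
`γ = min(α-β, 1-β) > 0`. For `M^γ` large this beats `(M φ)^{1+αi}` by a factor `2^{1+αi}`, so the
bound cannot be the first to fail. Letting `ε → 0` and summing the `1/(1+αi)`-th powers of the
blocks gives the claim with `C = n M`.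
-/

open MeasureTheory

/-- The `i`-th d-dimensional block of a point of `ℝ^{nd}`, as a vector of the Euclidean
space `ℝ^d`. -/
noncomputable def blkOf (n d : ℕ) (x : Fin n × Fin d → ℝ) (i : Fin n) :
    EuclideanSpace ℝ (Fin d) :=
  (EuclideanSpace.equiv (Fin d) ℝ).symm (fun a => x (i, a))

/-- The anisotropic distance `d(x,y) = Σ_j |(x-y)_j|^{1/(1+α(j-1))}` on `ℝ^{nd}`
(`j : Fin n` is 0-indexed, so the exponent reads `1/(1+α j)`). -/
noncomputable def anisoDist (n d : ℕ) (α : ℝ) (x y : Fin n × Fin d → ℝ) : ℝ :=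
  ∑ j : Fin n, ‖blkOf n d (x - y) j‖ ^ (1 / (1 + α * (j : ℕ)))

/-- `θ` is a flow started from `x` at time `t`, i.e. a continuous solution on `[t,T]` of
`θ s = x + ∫_t^s (A θ_v + F(v, θ_v)) dv`. -/
def IsFlow (n d : ℕ) (T : ℝ) (A : Matrix (Fin n × Fin d) (Fin n × Fin d) ℝ)
    (F : ℝ → (Fin n × Fin d → ℝ) → (Fin n × Fin d → ℝ)) (t : ℝ)
    (x : Fin n × Fin d → ℝ) (θ : ℝ → Fin n × Fin d → ℝ) : Prop :=
  ContinuousOn θ (Set.Icc t T) ∧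
  ∀ s ∈ Set.Icc t T, θ s = x + ∫ v in t..s, (A.mulVec (θ v) + F v (θ v))

open Set Filter Topology
open scoped Matrix

theorem forall_le_of_forall_lt_of_improves {ι : Type*} [Finite ι] {u b : ι → ℝ → ℝ} {t s : ℝ}
    (hu : ∀ i, ContinuousOn (u i) (Icc t s)) (hb : ∀ i, ContinuousOn (b i) (Icc t s))
    (hstart : ∀ i, u i t < b i t)
    (hstep : ∀ σ ∈ Icc t s, (∀ v ∈ Icc t σ, ∀ i, u i v ≤ b i v) → ∀ i, u i σ < b i σ) :
    ∀ v ∈ Icc t s, ∀ i, u i v ≤ b i v := by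
  set bad := ⋃ i, {v ∈ Icc t s | b i v ≤ u i v}
  have hbad : ∀ v ∈ Icc t s, v ∉ bad → ∀ i, u i v ≤ b i v := fun v hv hvb i =>
    le_of_not_ge fun h => hvb (mem_iUnion.2 ⟨i, hv, h⟩)
  by_contra! hne
  obtain ⟨v₀, hv₀, i₀, hi₀⟩ := hne
  have hne : bad.Nonempty := ⟨v₀, mem_iUnion.2 ⟨i₀, hv₀, hi₀.le⟩⟩
  have hclosed : IsClosed bad :=
    isClosed_iUnion_of_finite fun i => isClosed_Icc.isClosed_le (hb i) (hu i)
  have hbdd : BddBelow bad := ⟨t, fun v hv => by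
    obtain ⟨i, hvi, -⟩ := mem_iUnion.1 hv; exact hvi.1⟩
  set τ := sInf bad
  obtain ⟨iτ, hτ, hτi⟩ := mem_iUnion.1 (hclosed.csInf_mem hne hbdd)
  have hbefore : ∀ v ∈ Ico t τ, ∀ i, u i v ≤ b i v := fun v hv =>
    hbad v ⟨hv.1, hv.2.le.trans hτ.2⟩ fun hvb => (csInf_le hbdd hvb).not_gt hv.2
  have htτ : t < τ := hτ.1.lt_of_ne fun h => (hstart iτ).not_ge (h ▸ hτi)
  have hupto : ∀ v ∈ Icc t τ, ∀ i, u i v ≤ b i v := by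
    intro v hv i
    have hsub : Icc t τ ⊆ Icc t s := Icc_subset_Icc_right hτ.2
    have hcl : IsClosed {v ∈ Icc t τ | u i v ≤ b i v} :=
      isClosed_Icc.isClosed_le ((hu i).mono hsub) ((hb i).mono hsub)
    have hIco : Ico t τ ⊆ {v ∈ Icc t τ | u i v ≤ b i v} := fun w hw =>
      ⟨Ico_subset_Icc_self hw, hbefore w hw i⟩
    rw [← closure_Ico htτ.ne] at hv
    exact (hcl.closure_subset_iff.2 hIco hv).2
  exact (hstep τ hτ hupto iτ).not_ge hτi

theorem Real.rpow_le_mul_rpow_of_le_of_le_add_one {x c a e : ℝ} (hx : 0 < x) (hxc : x ≤ c)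
    (hc : 1 ≤ c) (hea : e ≤ a) (hae : a ≤ e + 1) : x ^ a ≤ c * x ^ e := by
  have hgap : x ^ (a - e) ≤ c :=
    calc x ^ (a - e) ≤ c ^ (a - e) := Real.rpow_le_rpow hx.le hxc (by linarith)
      _ ≤ c ^ (1 : ℝ) := Real.rpow_le_rpow_of_exponent_le hc (by linarith)
      _ = c := Real.rpow_one c
  calc x ^ a = x ^ (a - e) * x ^ e := by rw [← Real.rpow_add hx, sub_add_cancel]
    _ ≤ c * x ^ e := mul_le_mul_of_nonneg_right hgap (by positivity)

theorem le_half_mul_rpow_of_le_add {a b M φ α γ e p δ w : ℝ} (ha : 0 ≤ a) (hb : 0 ≤ b)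
    (hM : 1 ≤ M) (hMγ : (1 + a + 3 * b) * 2 ^ e ≤ M ^ γ) (hφ : 0 < φ) (hφ3 : φ ≤ 3)
    (hγα : γ ≤ α) (hγe : γ ≤ e) (hpe : p ≤ e - γ) (hep : e ≤ p + α) (hpe1 : p + α ≤ e + 1)
    (hδφ : δ ≤ φ ^ α)
    (hw : w ≤ φ ^ e + (a * (M * φ) ^ (e - α) + b * (M * φ) ^ p) * δ) :
    w ≤ (M / 2 * φ) ^ e := by
  have hM0 : 0 < M := by linarith
  have hMe : M ^ (e - α) ≤ M ^ (e - γ) := Real.rpow_le_rpow_of_exponent_le hM (by linarith)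
  have hMp : M ^ p ≤ M ^ (e - γ) := Real.rpow_le_rpow_of_exponent_le hM hpe
  have hMγe : 1 ≤ M ^ (e - γ) := Real.one_le_rpow hM (by linarith)
  have hφp : φ ^ (p + α) ≤ 3 * φ ^ e :=
    Real.rpow_le_mul_rpow_of_le_of_le_add_one hφ hφ3 (by norm_num) hep hpe1
  have hdrift : (a * (M * φ) ^ (e - α) + b * (M * φ) ^ p) * δ
      ≤ a * M ^ (e - α) * φ ^ e + b * M ^ p * φ ^ (p + α) := by
    calc (a * (M * φ) ^ (e - α) + b * (M * φ) ^ p) * δ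
        ≤ (a * (M * φ) ^ (e - α) + b * (M * φ) ^ p) * φ ^ α :=
          mul_le_mul_of_nonneg_left hδφ (by positivity)
      _ = a * M ^ (e - α) * φ ^ e + b * M ^ p * φ ^ (p + α) := by
          rw [Real.mul_rpow hM0.le hφ.le, Real.mul_rpow hM0.le hφ.le, Real.rpow_add hφ,
            Real.rpow_sub hφ]
          field_simp
  have hgain : (1 + a + 3 * b) * M ^ (e - γ) ≤ (M / 2) ^ e := by
    rw [Real.div_rpow hM0.le zero_le_two, Real.rpow_sub hM0, le_div_iff₀ (by positivity)]
    calc (1 + a + 3 * b) * (M ^ e / M ^ γ) * 2 ^ e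
        = (1 + a + 3 * b) * 2 ^ e * (M ^ e / M ^ γ) := by ring
      _ ≤ M ^ γ * (M ^ e / M ^ γ) := by gcongr
      _ = M ^ e := by field_simp
  rw [Real.mul_rpow (by positivity) hφ.le]
  have hφe : 0 ≤ φ ^ e := by positivity
  calc w ≤ φ ^ e + (a * M ^ (e - α) * φ ^ e + b * M ^ p * φ ^ (p + α)) := by linarith
    _ ≤ M ^ (e - γ) * φ ^ e + (a * M ^ (e - γ) * φ ^ e + b * M ^ (e - γ) * (3 * φ ^ e)) := by
        gcongr
        exact le_mul_of_one_le_left hφe hMγe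
    _ = (1 + a + 3 * b) * M ^ (e - γ) * φ ^ e := by ring
    _ ≤ (M / 2) ^ e * φ ^ e := by gcongr

theorem exists_one_le_forall_le_rpow {ι : Type*} [Finite ι] {γ : ℝ} (hγ : 0 < γ) (c : ι → ℝ) :
    ∃ M : ℝ, 1 ≤ M ∧ ∀ i, c i ≤ M ^ γ :=
  ((eventually_ge_atTop 1).and
    (eventually_all.2 fun i => (tendsto_rpow_atTop hγ).eventually_ge_atTop (c i))).exists

section Bootstrap

variable {ι : Type*} [Finite ι] {u : ι → ℝ → ℝ} {e p : ι → ℝ} {t s D α γ a b M : ℝ}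

theorem forall_le_rpow_add_of_increment_le {ε : ℝ} (hst : s - t ≤ 1)
    (hD0 : 0 ≤ D) (hD1 : D ≤ 1) (hε0 : 0 < ε) (hε1 : ε ≤ 1) (hα : 0 < α) (hγ : 0 < γ)
    (hγα : γ ≤ α) (hγe : ∀ i, γ ≤ e i)
    (hp : ∀ i, p i ≤ e i - γ ∧ e i ≤ p i + α ∧ p i + α ≤ e i + 1)
    (ha : 0 ≤ a) (hb : 0 ≤ b) (hM1 : 1 ≤ M) (hM : ∀ i, (1 + a + 3 * b) * 2 ^ e i ≤ M ^ γ)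
    (hu : ∀ i, ContinuousOn (u i) (Icc t s)) (hut : ∀ i, u i t ≤ D ^ e i)
    (hinc : ∀ σ ∈ Icc t s, ∀ r, 0 ≤ r → (∀ v ∈ Icc t σ, ∀ k, u k v ≤ r ^ e k) →
      ∀ i, u i σ ≤ u i t + (a * r ^ (e i - α) + b * r ^ p i) * (σ - t)) :
    ∀ v ∈ Icc t s, ∀ i, u i v ≤ (M * (D + ε + (v - t) ^ (1 / α))) ^ e i := by
  set φ : ℝ → ℝ := fun v => D + ε + (v - t) ^ (1 / α)
  have hM0 : 0 < M := by linarith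
  have he : ∀ i, 0 < e i := fun i => hγ.trans_le (hγe i)
  have hα' : 0 ≤ 1 / α := by positivity
  have hφ : ∀ v ∈ Icc t s, 0 < φ v ∧ D ≤ φ v ∧ φ v ≤ 3 ∧ v - t ≤ φ v ^ α := fun v hv => by
    have h0 := Real.rpow_nonneg (sub_nonneg.2 hv.1) (1 / α)
    have h1 := Real.rpow_le_one (sub_nonneg.2 hv.1) (by linarith [hv.2]) hα'
    have hφ0 : 0 < φ v := by simp only [φ]; linarith
    refine ⟨hφ0, by simp only [φ]; linarith, by simp only [φ]; linarith, ?_⟩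
    rw [← Real.rpow_inv_le_iff_of_pos (sub_nonneg.2 hv.1) hφ0.le hα, ← one_div]
    simp only [φ]; linarith
  have hφ_mono : ∀ v w, t ≤ v → v ≤ w → φ v ≤ φ w := fun v w hv hvw => by
    have := Real.rpow_le_rpow (sub_nonneg.2 hv) (sub_le_sub_right hvw t) hα'
    simp only [φ]; linarith
  have hφ_cont : Continuous φ := by
    have := Real.continuous_rpow_const hα'; fun_prop
  refine forall_le_of_forall_lt_of_improves hu
    (fun i => ((Real.continuous_rpow_const (he i).le).comp
      (continuous_const.mul hφ_cont)).continuousOn)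
    (fun i => ?_) (fun σ hσ hbound i => ?_)
  · have hDφ : D < M * φ t := by
      simp only [φ, sub_self, Real.zero_rpow (one_div_pos.2 hα).ne', add_zero]
      nlinarith
    exact (hut i).trans_lt (Real.rpow_lt_rpow hD0 hDφ (he i))
  · obtain ⟨hσφ, hDφ, hφ3, hδ⟩ := hφ σ hσ
    have hσbound : ∀ v ∈ Icc t σ, ∀ k, u k v ≤ (M * φ σ) ^ e k := fun v hv k =>
      (hbound v hv k).trans (Real.rpow_le_rpow (by positivity [(hφ v ⟨hv.1, hv.2.trans hσ.2⟩).1])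
        (mul_le_mul_of_nonneg_left (hφ_mono v σ hv.1 hv.2) hM0.le) (he k).le)
    have hstart : u i t ≤ φ σ ^ e i := (hut i).trans (Real.rpow_le_rpow hD0 hDφ (he i).le)
    have hhalf := le_half_mul_rpow_of_le_add ha hb hM1 (hM i) hσφ hφ3 hγα (hγe i) (hp i).1
      (hp i).2.1 (hp i).2.2 hδ
      ((hinc σ hσ (M * φ σ) (by positivity) hσbound i).trans (by gcongr))
    change u i σ < (M * φ σ) ^ e i
    exact hhalf.trans_lt (Real.rpow_lt_rpow (by positivity)
      (mul_lt_mul_of_pos_right (half_lt_self hM0) hσφ) (he i))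

theorem le_rpow_of_increment_le (hts : t ≤ s) (hst : s - t ≤ 1)
    (hD0 : 0 ≤ D) (hD1 : D ≤ 1) (hα : 0 < α) (hγ : 0 < γ)
    (hγα : γ ≤ α) (hγe : ∀ i, γ ≤ e i)
    (hp : ∀ i, p i ≤ e i - γ ∧ e i ≤ p i + α ∧ p i + α ≤ e i + 1)
    (ha : 0 ≤ a) (hb : 0 ≤ b) (hM1 : 1 ≤ M) (hM : ∀ i, (1 + a + 3 * b) * 2 ^ e i ≤ M ^ γ)
    (hu : ∀ i, ContinuousOn (u i) (Icc t s)) (hut : ∀ i, u i t ≤ D ^ e i)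
    (hinc : ∀ σ ∈ Icc t s, ∀ r, 0 ≤ r → (∀ v ∈ Icc t σ, ∀ k, u k v ≤ r ^ e k) →
      ∀ i, u i σ ≤ u i t + (a * r ^ (e i - α) + b * r ^ p i) * (σ - t)) (i : ι) :
    u i s ≤ (M * (D + (s - t) ^ (1 / α))) ^ e i := by
  have hlim : Tendsto (fun ε => (M * (D + ε + (s - t) ^ (1 / α))) ^ e i) (𝓝[>] 0)
      (𝓝 ((M * (D + 0 + (s - t) ^ (1 / α))) ^ e i)) :=
    ((Real.continuous_rpow_const (hγ.trans_le (hγe i)).le).comp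
      (by fun_prop)).continuousAt.tendsto.mono_left nhdsWithin_le_nhds
  rw [add_zero] at hlim
  refine ge_of_tendsto hlim ?_
  filter_upwards [Ioc_mem_nhdsGT zero_lt_one] with ε hε
  exact forall_le_rpow_add_of_increment_le hst hD0 hD1 hε.1 hε.2 hα hγ hγα hγe hp ha hb hM1
    hM hu hut hinc s ⟨hts, le_rfl⟩ i

end Bootstrap

section Blocks

variable {n d : ℕ}

noncomputable def blkCLM (n d : ℕ) (i : Fin n) :
    (Fin n × Fin d → ℝ) →L[ℝ] EuclideanSpace ℝ (Fin d) :=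
  (EuclideanSpace.equiv (Fin d) ℝ).symm.toContinuousLinearMap.comp
    (ContinuousLinearMap.pi fun a => ContinuousLinearMap.proj (i, a))

@[simp]
theorem blkCLM_apply (i : Fin n) (x : Fin n × Fin d → ℝ) : blkCLM n d i x = blkOf n d x i :=
  rfl

@[simp]
theorem blkOf_apply (x : Fin n × Fin d → ℝ) (i : Fin n) (a : Fin d) : blkOf n d x i a = x (i, a) :=
  rfl

theorem abs_le_norm_blkOf (x : Fin n × Fin d → ℝ) (i : Fin n) (a : Fin d) :
    |x (i, a)| ≤ ‖blkOf n d x i‖ :=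
  PiLp.norm_apply_le (blkOf n d x i) a

theorem norm_blkOf_le_sum_abs (x : Fin n × Fin d → ℝ) (i : Fin n) :
    ‖blkOf n d x i‖ ≤ ∑ a, |x (i, a)| := by
  rw [EuclideanSpace.norm_eq, Real.sqrt_le_left (by positivity)]
  simpa [sq_abs] using
    Finset.sum_sq_le_sq_sum_of_nonneg (s := Finset.univ) fun a _ => abs_nonneg (x (i, a))

theorem norm_blkOf_mulVec_le {A : Matrix (Fin n × Fin d) (Fin n × Fin d) ℝ}
    (hA : ∀ (i j : Fin n) (a b : Fin d), (j : ℕ) + 1 ≠ (i : ℕ) → A (i, a) (j, b) = 0)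
    {w : Fin n × Fin d → ℝ} {i : Fin n} {r : ℝ} (hr : 0 ≤ r)
    (hw : ∀ j : Fin n, (j : ℕ) + 1 = i → ‖blkOf n d w j‖ ≤ r) :
    ‖blkOf n d (A *ᵥ w) i‖ ≤ (∑ q, ∑ p, |A q p|) * r := by
  have hrow : ∀ a, |(A *ᵥ w) (i, a)| ≤ (∑ p, |A (i, a) p|) * r := by
    intro a
    rw [Matrix.mulVec, dotProduct, Finset.sum_mul]
    refine (Finset.abs_sum_le_sum_abs _ _).trans (Finset.sum_le_sum fun ⟨j, b⟩ _ => ?_)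
    rw [abs_mul]
    by_cases hj : (j : ℕ) + 1 = i
    · exact mul_le_mul_of_nonneg_left ((abs_le_norm_blkOf w j b).trans (hw j hj)) (abs_nonneg _)
    · simp [hA i j a b hj]
  calc ‖blkOf n d (A *ᵥ w) i‖ ≤ ∑ a, |(A *ᵥ w) (i, a)| := norm_blkOf_le_sum_abs _ _
    _ ≤ ∑ a, (∑ p, |A (i, a) p|) * r := Finset.sum_le_sum fun a _ => hrow a
    _ ≤ (∑ q, ∑ p, |A q p|) * r := by
      rw [← Finset.sum_mul, Fintype.sum_prod_type]
      gcongr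
      exact Finset.single_le_sum (f := fun j => ∑ a, ∑ p, |A (j, a) p|)
        (fun j _ => by positivity) (Finset.mem_univ i)

end Blocks

section AnisoDist

variable {n d : ℕ} {α : ℝ}

theorem anisoDist_nonneg (x y : Fin n × Fin d → ℝ) : 0 ≤ anisoDist n d α x y := by
  unfold anisoDist; positivity

theorem norm_blkOf_le_anisoDist_rpow (hα : 0 ≤ α) (x y : Fin n × Fin d → ℝ) (i : Fin n) :
    ‖blkOf n d (x - y) i‖ ≤ anisoDist n d α x y ^ (1 + α * (i : ℕ)) := by
  have he : 0 < 1 + α * (i : ℕ) := by positivity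
  rw [← Real.rpow_inv_le_iff_of_pos (norm_nonneg _) (anisoDist_nonneg x y) he,
    ← one_div]
  exact Finset.single_le_sum (f := fun j : Fin n => ‖blkOf n d (x - y) j‖ ^ (1 / (1 + α * (j : ℕ))))
    (fun j _ => by positivity) (Finset.mem_univ i)

theorem anisoDist_le_of_forall_norm_blkOf_le (hα : 0 ≤ α) {x y : Fin n × Fin d → ℝ} {r : ℝ}
    (hr : 0 ≤ r) (h : ∀ i : Fin n, ‖blkOf n d (x - y) i‖ ≤ r ^ (1 + α * (i : ℕ))) :
    anisoDist n d α x y ≤ n * r := by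
  have hblock : ∀ i : Fin n, ‖blkOf n d (x - y) i‖ ^ (1 / (1 + α * (i : ℕ))) ≤ r := fun i => by
    rw [one_div, Real.rpow_inv_le_iff_of_pos (norm_nonneg _) hr (by positivity)]
    exact h i
  simpa [anisoDist] using Finset.sum_le_card_nsmul Finset.univ _ r fun i _ => hblock i

end AnisoDist

theorem Finset.sum_rpow_div_le_card_mul {ι : Type*} (S : Finset ι) {u e : ι → ℝ} {p r : ℝ}
    (hp : 0 ≤ p) (hr : 0 ≤ r) (he : ∀ k, 0 < e k) (hu0 : ∀ k, 0 ≤ u k)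
    (hu : ∀ k, u k ≤ r ^ e k) : ∑ k ∈ S, u k ^ (p / e k) ≤ S.card * r ^ p := by
  have hterm : ∀ k ∈ S, u k ^ (p / e k) ≤ r ^ p := fun k _ =>
    calc u k ^ (p / e k) ≤ (r ^ e k) ^ (p / e k) :=
          Real.rpow_le_rpow (hu0 k) (hu k) (div_nonneg hp (he k).le)
      _ = r ^ p := by rw [← Real.rpow_mul hr, mul_div_cancel₀ _ (he k).ne']
  simpa using Finset.sum_le_card_nsmul S _ _ hterm

/-- The Hölder order of `F_i` in the variable `x_k` is `holderExp α β i / (1 + α k)`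
(blocks are indexed from `0`). -/
noncomputable def holderExp (α β : ℝ) (i : ℕ) : ℝ :=
  if i = 0 then β else 1 + α * ((i : ℝ) - 1) + β

theorem holderExp_nonneg {α β : ℝ} (hα : 0 ≤ α) (hβ : 0 ≤ β) (i : ℕ) : 0 ≤ holderExp α β i := by
  unfold holderExp
  split_ifs with hi
  · exact hβ
  · have : (1 : ℝ) ≤ i := by exact_mod_cast Nat.one_le_iff_ne_zero.2 hi
    have := mul_nonneg hα (sub_nonneg.2 this)
    linarith

theorem holderExp_bounds {α β : ℝ} (hβ : β ∈ Ioo (0 : ℝ) 1) (hαβ : α + β ∈ Ioo (1 : ℝ) 2)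
    (i : ℕ) :
    holderExp α β i ≤ 1 + α * i - min (α - β) (1 - β) ∧ 1 + α * i ≤ holderExp α β i + α ∧
      holderExp α β i + α ≤ 1 + α * i + 1 := by
  have h1 := min_le_left (α - β) (1 - β)
  have h2 := min_le_right (α - β) (1 - β)
  unfold holderExp
  split_ifs with hi
  · subst hi
    simp only [Nat.cast_zero, mul_zero, add_zero]
    refine ⟨?_, ?_, ?_⟩ <;> linarith [hαβ.1, hαβ.2]
  · refine ⟨?_, ?_, ?_⟩ <;> linarith [hβ.1, hβ.2]

theorem norm_blkOf_drift_sub_le {n d : ℕ} (hn : 1 ≤ n) {α β T K v r : ℝ} (hα : 0 ≤ α)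
    (hβ : 0 < β) (hK : 0 ≤ K) {A : Matrix (Fin n × Fin d) (Fin n × Fin d) ℝ}
    (hA : ∀ (i j : Fin n) (a b : Fin d), (j : ℕ) + 1 ≠ (i : ℕ) → A (i, a) (j, b) = 0)
    {F : ℝ → (Fin n × Fin d → ℝ) → (Fin n × Fin d → ℝ)}
    (hF1 : ∀ t ∈ Set.Icc (0 : ℝ) T, ∀ x x' : Fin n × Fin d → ℝ,
      ‖blkOf n d (F t x - F t x') ⟨0, hn⟩‖ ≤
        K * ∑ k : Fin n, ‖blkOf n d (x - x') k‖ ^ (β / (1 + α * (k : ℕ))))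
    (hFi : ∀ i : Fin n, 1 ≤ (i : ℕ) → ∀ t ∈ Set.Icc (0 : ℝ) T, ∀ x x' : Fin n × Fin d → ℝ,
      ‖blkOf n d (F t x - F t x') i‖ ≤
        K * ∑ k ∈ Finset.univ.filter (fun k : Fin n => i ≤ k),
          ‖blkOf n d (x - x') k‖ ^ ((1 + α * ((i : ℕ) - 1 : ℝ) + β) / (1 + α * (k : ℕ))))
    (hv : v ∈ Icc 0 T) {w w' : Fin n × Fin d → ℝ} (hr : 0 ≤ r)
    (hw : ∀ k : Fin n, ‖blkOf n d (w - w') k‖ ≤ r ^ (1 + α * (k : ℕ))) (i : Fin n) :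
    ‖blkOf n d ((A *ᵥ w + F v w) - (A *ᵥ w' + F v w')) i‖ ≤
      (∑ q, ∑ p, |A q p|) * r ^ (1 + α * (i : ℕ) - α) + K * n * r ^ holderExp α β i := by
  have hsplit : (A *ᵥ w + F v w) - (A *ᵥ w' + F v w') = A *ᵥ (w - w') + (F v w - F v w') := by
    rw [Matrix.mulVec_sub]; abel
  rw [hsplit, ← blkCLM_apply, map_add, blkCLM_apply, blkCLM_apply]
  refine (norm_add_le _ _).trans (add_le_add ?_ ?_)
  · refine norm_blkOf_mulVec_le hA (by positivity) fun j hj => (hw j).trans_eq ?_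
    rw [← hj]; push_cast; ring_nf
  · obtain ⟨S, hS⟩ : ∃ S : Finset (Fin n), ‖blkOf n d (F v w - F v w') i‖ ≤
        K * ∑ k ∈ S, ‖blkOf n d (w - w') k‖ ^ (holderExp α β i / (1 + α * (k : ℕ))) := by
      by_cases hi : (i : ℕ) = 0
      · obtain rfl : i = ⟨0, hn⟩ := Fin.ext hi
        exact ⟨Finset.univ, by simpa [holderExp] using hF1 v hv w w'⟩
      · exact ⟨_, by simpa [holderExp, hi] using hFi i (by omega) v hv w w'⟩
    rw [mul_assoc]
    refine hS.trans (mul_le_mul_of_nonneg_left ?_ hK)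
    refine (S.sum_rpow_div_le_card_mul (holderExp_nonneg hα hβ.le i) hr (fun k => by positivity)
      (fun k => norm_nonneg _) hw).trans ?_
    gcongr
    exact_mod_cast (Finset.card_le_univ S).trans_eq (Fintype.card_fin n)

theorem ContinuousLinearMap.norm_map_sub_le_of_integral {E G : Type*} [NormedAddCommGroup E]
    [NormedSpace ℝ E] [CompleteSpace E] [NormedAddCommGroup G] [NormedSpace ℝ G] [CompleteSpace G]
    (L : E →L[ℝ] G) {x x' : E} {f f' : ℝ → E} {t σ B : ℝ} (htσ : t ≤ σ)
    (hf : IntervalIntegrable f volume t σ) (hf' : IntervalIntegrable f' volume t σ)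
    (hB : ∀ v ∈ Ioc t σ, ‖L (f v - f' v)‖ ≤ B) :
    ‖L ((x + ∫ v in t..σ, f v) - (x' + ∫ v in t..σ, f' v))‖ ≤ ‖L (x - x')‖ + B * (σ - t) := by
  have hsplit : (x + ∫ v in t..σ, f v) - (x' + ∫ v in t..σ, f' v)
      = (x - x') + ∫ v in t..σ, (f v - f' v) := by
    rw [intervalIntegral.integral_sub hf hf']; abel
  rw [hsplit, map_add, ← L.intervalIntegral_comp_comm (hf.sub hf')]
  refine (norm_add_le _ _).trans (add_le_add_right ?_ _)
  have hB' : ∀ v ∈ uIoc t σ, ‖L (f v - f' v)‖ ≤ B := by rwa [uIoc_of_le htσ]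
  simpa [abs_of_nonneg (sub_nonneg.2 htσ)] using
    intervalIntegral.norm_integral_le_of_norm_le_const hB'

namespace IsFlow

variable {n d : ℕ} {T t : ℝ} {A : Matrix (Fin n × Fin d) (Fin n × Fin d) ℝ}
  {F : ℝ → (Fin n × Fin d → ℝ) → (Fin n × Fin d → ℝ)} {x x' : Fin n × Fin d → ℝ}
  {θ θ' : ℝ → Fin n × Fin d → ℝ}

theorem apply_start (hθ : IsFlow n d T A F t x θ) (htT : t ≤ T) : θ t = x := by
  simpa using hθ.2 t ⟨le_rfl, htT⟩

theorem intervalIntegrable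
    (hFc : ContinuousOn (fun p : ℝ × (Fin n × Fin d → ℝ) => F p.1 p.2) (Icc 0 T ×ˢ univ))
    (hθ : IsFlow n d T A F t x θ) (ht : 0 ≤ t) {σ : ℝ} (hσ : σ ∈ Icc t T) :
    IntervalIntegrable (fun v => A *ᵥ θ v + F v (θ v)) volume t σ := by
  have hθc : ContinuousOn θ (Icc t σ) := hθ.1.mono (Icc_subset_Icc_right hσ.2)
  refine ContinuousOn.intervalIntegrable ?_
  rw [uIcc_of_le hσ.1]
  exact ((continuous_const.matrix_mulVec continuous_id).comp_continuousOn hθc).add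
    (hFc.comp (continuousOn_id.prodMk hθc)
      fun v hv => ⟨⟨ht.trans hv.1, hv.2.trans hσ.2⟩, mem_univ _⟩)

theorem continuousOn_norm_blkOf_sub (hθ : IsFlow n d T A F t x θ)
    (hθ' : IsFlow n d T A F t x' θ') (i : Fin n) :
    ContinuousOn (fun v => ‖blkOf n d (θ v - θ' v) i‖) (Icc t T) :=
  ((blkCLM n d i).continuous.comp_continuousOn (hθ.1.sub hθ'.1)).norm

theorem norm_blkOf_sub_le
    (hFc : ContinuousOn (fun p : ℝ × (Fin n × Fin d → ℝ) => F p.1 p.2) (Icc 0 T ×ˢ univ))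
    (hθ : IsFlow n d T A F t x θ) (hθ' : IsFlow n d T A F t x' θ') (ht : 0 ≤ t) {σ B : ℝ}
    (hσ : σ ∈ Icc t T) (i : Fin n)
    (hB : ∀ v ∈ Ioc t σ,
      ‖blkOf n d ((A *ᵥ θ v + F v (θ v)) - (A *ᵥ θ' v + F v (θ' v))) i‖ ≤ B) :
    ‖blkOf n d (θ σ - θ' σ) i‖ ≤ ‖blkOf n d (x - x') i‖ + B * (σ - t) := by
  rw [hθ.2 σ hσ, hθ'.2 σ hσ]
  exact (blkCLM n d i).norm_map_sub_le_of_integral hσ.1 (hθ.intervalIntegrable hFc ht hσ)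
    (hθ'.intervalIntegrable hFc ht hσ) hB

end IsFlow

theorem flow_anisoDist_sensitivity_general (n d : ℕ) (hn : 1 ≤ n)
    (α β T : ℝ) (hα : α ∈ Set.Ioo (0 : ℝ) 2) (hβ : β ∈ Set.Ioo (0 : ℝ) 1)
    (hαβ : α + β ∈ Set.Ioo (1 : ℝ) 2) (hβα : β < α) (hT1 : T ≤ 1)
    (A : Matrix (Fin n × Fin d) (Fin n × Fin d) ℝ)
    (hA : ∀ (i j : Fin n) (a b : Fin d), (j : ℕ) + 1 ≠ (i : ℕ) → A (i, a) (j, b) = 0)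
    (F : ℝ → (Fin n × Fin d → ℝ) → (Fin n × Fin d → ℝ))
    (hFc : ContinuousOn (fun p : ℝ × (Fin n × Fin d → ℝ) => F p.1 p.2)
      (Set.Icc 0 T ×ˢ Set.univ))
    (K : ℝ) (hK : 0 ≤ K)
    (hF1 : ∀ t ∈ Set.Icc (0 : ℝ) T, ∀ x x' : Fin n × Fin d → ℝ,
      ‖blkOf n d (F t x - F t x') ⟨0, hn⟩‖ ≤
        K * ∑ k : Fin n, ‖blkOf n d (x - x') k‖ ^ (β / (1 + α * (k : ℕ))))
    (hFi : ∀ i : Fin n, 1 ≤ (i : ℕ) → ∀ t ∈ Set.Icc (0 : ℝ) T, ∀ x x' : Fin n × Fin d → ℝ,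
      ‖blkOf n d (F t x - F t x') i‖ ≤
        K * ∑ k ∈ Finset.univ.filter (fun k : Fin n => i ≤ k),
          ‖blkOf n d (x - x') k‖ ^ ((1 + α * ((i : ℕ) - 1 : ℝ) + β) / (1 + α * (k : ℕ)))) :
    ∃ C : ℝ, 1 ≤ C ∧
      ∀ t s : ℝ, t ∈ Set.Icc 0 T → s ∈ Set.Icc 0 T → t < s →
      ∀ x x' : Fin n × Fin d → ℝ, anisoDist n d α x x' ≤ 1 →
      ∀ θ θ' : ℝ → Fin n × Fin d → ℝ,
        IsFlow n d T A F t x θ → IsFlow n d T A F t x' θ' →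
        anisoDist n d α (θ s) (θ' s) ≤
          C * (anisoDist n d α x x' + (s - t) ^ (1 / α)) := by
  have hcA : 0 ≤ ∑ q, ∑ p, |A q p| := by positivity
  set cA := ∑ q, ∑ p, |A q p|
  set γ := min (α - β) (1 - β)
  have hγ : 0 < γ := lt_min (by linarith) (by linarith [hβ.2])
  have hγα : γ ≤ α - β := min_le_left _ _
  have hγβ : γ ≤ 1 - β := min_le_right _ _
  obtain ⟨M, hM1, hM⟩ := exists_one_le_forall_le_rpow hγ
    fun i : Fin n => (1 + cA + 3 * (K * n)) * 2 ^ (1 + α * (i : ℕ))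
  refine ⟨n * M, one_le_mul_of_one_le_of_one_le (by exact_mod_cast hn) hM1, ?_⟩
  intro t s ht hs hts x x' hxx θ θ' hθ hθ'
  have hsT : Icc t s ⊆ Icc t T := Icc_subset_Icc_right hs.2
  have htT : t ≤ T := hts.le.trans hs.2
  rw [mul_assoc]
  refine anisoDist_le_of_forall_norm_blkOf_le hα.1.le (mul_nonneg (by linarith)
    (add_nonneg (anisoDist_nonneg x x') (Real.rpow_nonneg (by linarith) _))) fun i => ?_
  refine le_rpow_of_increment_le (u := fun i v => ‖blkOf n d (θ v - θ' v) i‖)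
    (p := fun i => holderExp α β i) hts.le (by linarith [ht.1, hs.2]) (anisoDist_nonneg x x') hxx
    hα.1 hγ (by linarith [hβ.1])
    (fun i => by linarith [hβ.1, mul_nonneg hα.1.le (Nat.cast_nonneg (α := ℝ) i)])
    (fun i => holderExp_bounds hβ hαβ i) hcA (mul_nonneg hK n.cast_nonneg) hM1 hM
    (fun i => (hθ.continuousOn_norm_blkOf_sub hθ' i).mono hsT) (fun i => ?_)
    (fun σ hσ r hr hbound i => ?_) i
  · simp only [hθ.apply_start htT, hθ'.apply_start htT]
    exact norm_blkOf_le_anisoDist_rpow hα.1.le x x' i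
  · simp only [hθ.apply_start htT, hθ'.apply_start htT]
    exact hθ.norm_blkOf_sub_le hFc hθ' ht.1 (hsT hσ) i fun v hv =>
      norm_blkOf_drift_sub_le hn hα.1.le hβ.1 hK hA hF1 hFi
        ⟨ht.1.trans hv.1.le, hv.2.trans (hσ.2.trans hs.2)⟩ hr (hbound v ⟨hv.1.le, hv.2⟩) i

/-- Controls on the Flows: for any two flows started from `x` and `x'` at time `t`,
`d(θ_{t,s}(x), θ_{t,s}(x')) ≤ C [d(x,x') + (s-t)^{1/α}]`,
with `C` depending only on the data `n, d, α, β, A, K`. -/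
theorem flow_anisoDist_sensitivity (n d : ℕ) (hn : 1 ≤ n) (hd : 1 ≤ d)
    (α β T : ℝ) (hα : α ∈ Set.Ioo (0 : ℝ) 2) (hβ : β ∈ Set.Ioo (0 : ℝ) 1)
    (hαβ : α + β ∈ Set.Ioo (1 : ℝ) 2) (hβα : β < α) (hT0 : 0 < T) (hT1 : T ≤ 1)
    (A : Matrix (Fin n × Fin d) (Fin n × Fin d) ℝ)
    (hA : ∀ (i j : Fin n) (a b : Fin d), (j : ℕ) + 1 ≠ (i : ℕ) → A (i, a) (j, b) = 0)
    (F : ℝ → (Fin n × Fin d → ℝ) → (Fin n × Fin d → ℝ))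
    (hFc : ContinuousOn (fun p : ℝ × (Fin n × Fin d → ℝ) => F p.1 p.2)
      (Set.Icc 0 T ×ˢ Set.univ))
    (hFstruct : ∀ (i : Fin n) (t : ℝ) (x y : Fin n × Fin d → ℝ),
      (∀ k : Fin n, i ≤ k → blkOf n d x k = blkOf n d y k) →
      blkOf n d (F t x) i = blkOf n d (F t y) i)
    (K : ℝ) (hK : 0 ≤ K)
    (hF1 : ∀ t ∈ Set.Icc (0 : ℝ) T, ∀ x x' : Fin n × Fin d → ℝ,
      ‖blkOf n d (F t x - F t x') ⟨0, hn⟩‖ ≤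
        K * ∑ k : Fin n, ‖blkOf n d (x - x') k‖ ^ (β / (1 + α * (k : ℕ))))
    (hFi : ∀ i : Fin n, 1 ≤ (i : ℕ) → ∀ t ∈ Set.Icc (0 : ℝ) T, ∀ x x' : Fin n × Fin d → ℝ,
      ‖blkOf n d (F t x - F t x') i‖ ≤
        K * ∑ k ∈ Finset.univ.filter (fun k : Fin n => i ≤ k),
          ‖blkOf n d (x - x') k‖ ^ ((1 + α * ((i : ℕ) - 1 : ℝ) + β) / (1 + α * (k : ℕ)))) :
    ∃ C : ℝ, 1 ≤ C ∧
      ∀ t s : ℝ, t ∈ Set.Icc 0 T → s ∈ Set.Icc 0 T → t < s →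
      ∀ x x' : Fin n × Fin d → ℝ, anisoDist n d α x x' ≤ 1 →
      ∀ θ θ' : ℝ → Fin n × Fin d → ℝ,
        IsFlow n d T A F t x θ → IsFlow n d T A F t x' θ' →
        anisoDist n d α (θ s) (θ' s) ≤
          C * (anisoDist n d α x x' + (s - t) ^ (1 / α)) :=
  flow_anisoDist_sensitivity_general n d hn α β T hα hβ hαβ hβα hT1 A hA F hFc K hK hF1 hFi
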